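/- For a prime p ≡ 1 (mod 4), the dihedral group D₂ₚ is residual with respect to B^×: the subgroup of B^×(D₂ₚ) generated by all Ten^{D₂ₚ}_H(−1) for H ≤ D₂ₚ has index 2 in B^×(D₂ₚ), which has order 2³. For p ≡ 3 (mod 4), these elements generate all of B^×(D₂ₚ). -/

import Mathlib

open Pointwise

/-- Mark of the transitive `G`-set `G ⧸ K` at the subgroup `H`: the number of
`H`-fixed points of `G ⧸ K`. -/
noncomputable def burnsideMark (G : Type*) [Group G] (K H : Subgroup G) : ℤ :=
  Nat.card {x : G ⧸ K // ∀ h ∈ H, h • x = x}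

/-- The Burnside ring of `G`, realized inside the ghost ring `Subgroup G → ℤ`
as the subring generated by the marks of the transitive `G`-sets. -/
noncomputable def BurnsideRing (G : Type*) [Group G] : Subring (Subgroup G → ℤ) :=
  Subring.closure (Set.range (burnsideMark G))

/-- Ghost coordinates of a unit of the Burnside ring. -/
noncomputable def ghost {G : Type*} [Group G] (u : (BurnsideRing G)ˣ) : Subgroup G → ℤ :=
  (u.val : Subgroup G → ℤ)
/-- The ghost vector of the tensor induction `Ten_H^G(-1)` of the unit `-1 ∈ B(H)ˣ`:
its mark at `L ≤ G` is `(-1)` raised to the number of `(L,H)`-double cosets in `G`. -/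
noncomputable def tenNegOne {G : Type*} [Group G] (H : Subgroup G) : Subgroup G → ℤ :=
  fun L => (-1) ^ Nat.card (DoubleCoset.Quotient (L : Set G) (H : Set G))

/-!
Every subgroup of `D₂ₚ` is conjugate to `1`, `R = ⟨sr 0⟩`, `Cₚ` or `D₂ₚ`, and both marks and
double coset counts are invariant under conjugation, so ghost vectors are functions of these four
classes. As `Cₚ` is a `p`-group, `f 1 ≡ f Cₚ [ZMOD p]` for every `f ∈ B(D₂ₚ)`; for a unit both
values are `±1`, hence equal, and a unit is determined by its signs at `1`, `R` and `D₂ₚ`. All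
eight sign patterns occur: besides `-1` there are `[D/Cₚ] - 1` with signs `(1, -1, -1)` and
`[D/1] - 2 [D/R] + 1` with signs `(1, -1, 1)`.

Counting double cosets, `Ten(-1)` has signs `(1, -1, -1)` for `H = 1`, `-1` for `H = D₂ₚ`, and
`(-1, (-1) ^ |R\D₂ₚ/R|, -1)` for `H = R`, where `|R\D₂ₚ/R| = (p + 1) / 2`. For `p ≡ 3 [MOD 4]`
these generate all sign patterns; for `p ≡ 1 [MOD 4]` every `Ten_H(-1)` (`H = Cₚ` included)
lies in the kernel of the surjective character `u ↦ u(R) u(D₂ₚ)`, and `-1`, `Ten_1(-1)` already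
generate that kernel.
-/

section Marks

variable {G : Type*} [Group G]

theorem Subgroup.mem_conj_smul_iff {g x : G} {H : Subgroup G} :
    x ∈ MulAut.conj g • H ↔ g⁻¹ * x * g ∈ H := by
  rw [Subgroup.mem_pointwise_smul_iff_inv_smul_mem]
  simp [MulAut.smul_def]

theorem QuotientGroup.smul_mk_eq_self_iff {K : Subgroup G} {h g : G} :
    h • (g : G ⧸ K) = g ↔ g⁻¹ * h * g ∈ K := by
  rw [MulAction.Quotient.smul_mk, eq_comm, QuotientGroup.eq, smul_eq_mul, mul_assoc]

theorem burnsideMark_eq_index {K H : Subgroup G} (h : ∀ g : G, ∀ x ∈ H, g⁻¹ * x * g ∈ K) :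
    burnsideMark G K H = K.index := by
  rw [burnsideMark, Subgroup.index, Nat.card_congr (Equiv.subtypeUnivEquiv fun y => ?_)]
  intro x hx
  induction y using QuotientGroup.induction_on with
  | H g => exact QuotientGroup.smul_mk_eq_self_iff.mpr (h g x hx)

theorem burnsideMark_eq_zero {K H : Subgroup G} {x : G} (hx : x ∈ H)
    (h : ∀ g : G, g⁻¹ * x * g ∉ K) : burnsideMark G K H = 0 := by
  rw [burnsideMark, Nat.cast_eq_zero, Nat.card_eq_zero]
  refine Or.inl ⟨fun ⟨y, hy⟩ => ?_⟩
  induction y using QuotientGroup.induction_on with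
  | H g => exact h g (QuotientGroup.smul_mk_eq_self_iff.mp (hy x hx))

theorem burnsideMark_apply_bot (K : Subgroup G) : burnsideMark G K ⊥ = K.index :=
  burnsideMark_eq_index fun g x hx => by simp [Subgroup.mem_bot.mp hx]

theorem burnsideMark_of_le_of_normal {K H : Subgroup G} [K.Normal] (hHK : H ≤ K) :
    burnsideMark G K H = K.index :=
  burnsideMark_eq_index fun g x hx => by
    simpa using Subgroup.Normal.conj_mem inferInstance x (hHK hx) g⁻¹

theorem burnsideMark_of_not_le_of_normal {K H : Subgroup G} [K.Normal] (hHK : ¬ H ≤ K) :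
    burnsideMark G K H = 0 := by
  obtain ⟨x, hxH, hxK⟩ := Set.not_subset.mp hHK
  refine burnsideMark_eq_zero hxH fun g hg => hxK ?_
  simpa [mul_assoc] using Subgroup.Normal.conj_mem inferInstance _ hg g

theorem burnsideMark_bot_apply_of_ne_bot {H : Subgroup G} (hH : H ≠ ⊥) :
    burnsideMark G ⊥ H = 0 :=
  burnsideMark_of_not_le_of_normal (by rwa [le_bot_iff])

theorem burnsideMark_conj_smul (K H : Subgroup G) (g : G) :
    burnsideMark G K (MulAut.conj g • H) = burnsideMark G K H := by
  rw [burnsideMark, burnsideMark]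
  congr 1
  refine Nat.card_congr ((MulAction.toPerm g⁻¹).subtypeEquiv fun y => ?_)
  have hconj : ∀ x : G, x • g⁻¹ • y = g⁻¹ • y ↔ (g * x * g⁻¹) • y = y := fun x => by
    simp only [mul_smul, smul_eq_iff_eq_inv_smul]
  simp only [MulAction.toPerm_apply, hconj]
  refine ⟨fun hy x hx => hy _ ?_, fun hy x hx => ?_⟩
  · simpa [Subgroup.mem_conj_smul_iff, mul_assoc] using hx
  · simpa [mul_assoc] using hy _ (Subgroup.mem_conj_smul_iff.mp hx)

theorem burnsideMark_apply_bot_modEq {p : ℕ} [Fact p.Prime] [Finite G] {P : Subgroup G}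
    (hP : IsPGroup p P) (K : Subgroup G) :
    burnsideMark G K ⊥ ≡ burnsideMark G K P [ZMOD p] := by
  rw [burnsideMark_apply_bot, burnsideMark, Subgroup.index, Int.natCast_modEq_iff]
  convert hP.card_modEq_card_fixedPoints (G ⧸ K) using 1
  exact Nat.card_congr (Equiv.subtypeEquivRight fun y => by
    simp only [MulAction.mem_fixedPoints, Subtype.forall]
    rfl)

end Marks

section DoubleCoset

variable {G : Type*} [Group G]

theorem DoubleCoset.card_quotient_conj_smul (L H : Subgroup G) (g k : G) :
    Nat.card (DoubleCoset.Quotient (↑(MulAut.conj g • L) : Set G) ↑(MulAut.conj k • H)) =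
      Nat.card (DoubleCoset.Quotient (L : Set G) H) := by
  refine Nat.card_congr (Quotient.congr
    ⟨fun x => g⁻¹ * x * k, fun x => g * x * k⁻¹, fun x => by group, fun x => by group⟩
    fun a b => ?_)
  simp only [Equiv.coe_fn_mk, DoubleCoset.rel_iff, Subgroup.mem_conj_smul_iff]
  constructor
  · rintro ⟨x, hx, y, hy, rfl⟩
    exact ⟨_, hx, _, hy, by group⟩
  · rintro ⟨x, hx, y, hy, hb⟩
    refine ⟨g * x * g⁻¹, by simpa [mul_assoc] using hx, k * y * k⁻¹, by simpa [mul_assoc] using hy,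
      ?_⟩
    calc b = g * (g⁻¹ * b * k) * k⁻¹ := by group
      _ = _ := by rw [hb]; group

theorem DoubleCoset.card_quotient_bot_left (H : Subgroup G) :
    Nat.card (DoubleCoset.Quotient ((⊥ : Subgroup G) : Set G) H) = H.index := by
  rw [DoubleCoset.left_bot_eq_left_quot]
  rfl

theorem DoubleCoset.card_quotient_bot_right (L : Subgroup G) :
    Nat.card (DoubleCoset.Quotient (L : Set G) (⊥ : Subgroup G)) = L.index := by
  rw [DoubleCoset.right_bot_eq_right_quot]
  exact Nat.card_congr (QuotientGroup.quotientRightRelEquivQuotientLeftRel L)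

theorem DoubleCoset.card_quotient_eq_one {L H : Subgroup G}
    (h : ∀ g : G, ∃ x ∈ L, ∃ y ∈ H, g = x * y) :
    Nat.card (DoubleCoset.Quotient (L : Set G) H) = 1 := by
  rw [Nat.card_eq_one_iff_unique]
  refine ⟨⟨fun a b => ?_⟩, ⟨DoubleCoset.mk L H 1⟩⟩
  induction a using Quotient.inductionOn with | h a => ?_
  induction b using Quotient.inductionOn with | h b => ?_
  obtain ⟨x, hx, y, hy, rfl⟩ := h a
  obtain ⟨x', hx', y', hy', rfl⟩ := h b
  exact (DoubleCoset.eq L H _ _).mpr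
    ⟨x' * x⁻¹, mul_mem hx' (inv_mem hx), y⁻¹ * y', mul_mem (inv_mem hy) hy', by group⟩

end DoubleCoset

section BurnsideRing

variable {G : Type*} [Group G]

variable (G) in
def conjInvariantSubring : Subring (Subgroup G → ℤ) where
  carrier := {f | ∀ (g : G) (H : Subgroup G), f (MulAut.conj g • H) = f H}
  mul_mem' hf hf' g H := by simp [hf g H, hf' g H]
  one_mem' _ _ := rfl
  add_mem' hf hf' g H := by simp [hf g H, hf' g H]
  zero_mem' _ _ := rfl
  neg_mem' hf g H := by simp [hf g H]

theorem burnsideMark_mem (K : Subgroup G) : burnsideMark G K ∈ BurnsideRing G :=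
  Subring.subset_closure ⟨K, rfl⟩

theorem BurnsideRing.apply_conj_smul {f : Subgroup G → ℤ} (hf : f ∈ BurnsideRing G) (g : G)
    (H : Subgroup G) : f (MulAut.conj g • H) = f H := by
  have hle : BurnsideRing G ≤ conjInvariantSubring G :=
    Subring.closure_le.mpr (Set.range_subset_iff.mpr fun K g H => burnsideMark_conj_smul K H g)
  exact hle hf g H

theorem BurnsideRing.apply_bot_modEq [Finite G] {p : ℕ} [Fact p.Prime] {P : Subgroup G}
    (hP : IsPGroup p P) {f : Subgroup G → ℤ} (hf : f ∈ BurnsideRing G) :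
    f ⊥ ≡ f P [ZMOD p] := by
  let reduce (L : Subgroup G) : (Subgroup G → ℤ) →+* ZMod p :=
    (Int.castRingHom (ZMod p)).comp (Pi.evalRingHom _ L)
  have hle : BurnsideRing G ≤ (reduce ⊥).eqLocus (reduce P) :=
    Subring.closure_le.mpr (Set.range_subset_iff.mpr fun K =>
      (ZMod.intCast_eq_intCast_iff _ _ _).mpr (burnsideMark_apply_bot_modEq hP K))
  exact (ZMod.intCast_eq_intCast_iff _ _ _).mp (hle hf)

theorem ghost_injective : Function.Injective (ghost : (BurnsideRing G)ˣ → Subgroup G → ℤ) :=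
  fun _ _ h => Units.ext (Subtype.ext h)

theorem ghost_neg_one : ghost (-1 : (BurnsideRing G)ˣ) = -1 := rfl

theorem exists_ghost_eq_of_mul_self_eq_one {f : Subgroup G → ℤ} (hf : f ∈ BurnsideRing G)
    (hsq : f * f = 1) : ∃ v : (BurnsideRing G)ˣ, ghost v = f :=
  ⟨Units.mkOfMulEqOne ⟨f, hf⟩ ⟨f, hf⟩ (Subtype.ext hsq), rfl⟩

variable (G) in
noncomputable def ghostUnitAt (L : Subgroup G) : (BurnsideRing G)ˣ →* ℤˣ :=
  Units.map ((Pi.evalRingHom _ L).comp (BurnsideRing G).subtype).toMonoidHom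

theorem coe_ghostUnitAt (L : Subgroup G) (u : (BurnsideRing G)ˣ) :
    (ghostUnitAt G L u : ℤ) = ghost u L := rfl

theorem tenNegOne_conj_smul (H : Subgroup G) (g : G) :
    tenNegOne (MulAut.conj g • H) = tenNegOne H :=
  funext fun L => by
    simpa [tenNegOne] using congrArg ((-1 : ℤ) ^ ·) (DoubleCoset.card_quotient_conj_smul L H 1 g)

theorem tenNegOne_apply_conj_smul (H : Subgroup G) (g : G) (L : Subgroup G) :
    tenNegOne H (MulAut.conj g • L) = tenNegOne H L := by
  simpa [tenNegOne] using congrArg ((-1 : ℤ) ^ ·) (DoubleCoset.card_quotient_conj_smul L H g 1)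

theorem tenNegOne_bot_apply (L : Subgroup G) : tenNegOne ⊥ L = (-1) ^ L.index := by
  rw [tenNegOne, DoubleCoset.card_quotient_bot_right]

theorem tenNegOne_apply_bot (H : Subgroup G) : tenNegOne H ⊥ = (-1) ^ H.index := by
  rw [tenNegOne, DoubleCoset.card_quotient_bot_left]

theorem tenNegOne_apply_top (H : Subgroup G) : tenNegOne H ⊤ = -1 := by
  rw [tenNegOne, DoubleCoset.card_quotient_eq_one (L := ⊤)
    fun g => ⟨g, Subgroup.mem_top g, 1, one_mem H, (mul_one g).symm⟩, pow_one]

theorem tenNegOne_top : tenNegOne (⊤ : Subgroup G) = -1 :=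
  funext fun L => by
    rw [tenNegOne, DoubleCoset.card_quotient_eq_one (H := ⊤)
      fun g => ⟨1, one_mem L, g, Subgroup.mem_top g, (one_mul g).symm⟩, pow_one, Pi.neg_apply,
      Pi.one_apply]

theorem exists_ghost_eq_tenNegOne {H : Subgroup G} (hH : tenNegOne H ∈ BurnsideRing G) :
    ∃ v : (BurnsideRing G)ˣ, ghost v = tenNegOne H :=
  exists_ghost_eq_of_mul_self_eq_one hH <| funext fun L => by
    simp [tenNegOne, ← pow_add, ← two_mul, pow_mul]

variable (G) in
def tenNegOneUnits : Set (BurnsideRing G)ˣ := {v | ∃ H : Subgroup G, ghost v = tenNegOne H}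

theorem neg_one_mem_tenNegOneUnits : -1 ∈ tenNegOneUnits G :=
  ⟨⊤, by rw [ghost_neg_one, tenNegOne_top]⟩

end BurnsideRing

theorem ZMod.two_ne_zero_of_ne_two {p : ℕ} [Fact p.Prime] (hp2 : p ≠ 2) : (2 : ZMod p) ≠ 0 :=
  Ring.two_ne_zero (by rwa [ZMod.ringChar_zmod_n])

theorem Int.units_eq_of_modEq {n : ℤ} (hn : ¬ n ∣ 2) {a b : ℤˣ} (h : (a : ℤ) ≡ b [ZMOD n]) :
    a = b := by
  rcases Int.units_eq_one_or a with rfl | rfl <;> rcases Int.units_eq_one_or b with rfl | rfl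
  · rfl
  · exact absurd (by simpa using h.dvd) hn
  · exact absurd (by simpa using h.dvd) hn
  · rfl

theorem Subgroup.eq_top_of_mem_sign_basis {K : Subgroup (ℤˣ × ℤˣ × ℤˣ)} (h₁ : (-1, 1, 1) ∈ K)
    (h₂ : (1, -1, 1) ∈ K) (h₃ : (1, 1, -1) ∈ K) : K = ⊤ := by
  refine eq_top_iff.mpr fun ⟨a, b, c⟩ _ => ?_
  have hsplit : ((a, b, c) : ℤˣ × ℤˣ × ℤˣ) = (a, 1, 1) * (1, b, 1) * (1, 1, c) := by simp
  rw [hsplit]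
  refine mul_mem (mul_mem ?_ ?_) ?_
  · rcases Int.units_eq_one_or a with rfl | rfl
    exacts [one_mem K, h₁]
  · rcases Int.units_eq_one_or b with rfl | rfl
    exacts [one_mem K, h₂]
  · rcases Int.units_eq_one_or c with rfl | rfl
    exacts [one_mem K, h₃]

namespace DihedralGroup

section Subgroups

variable {n : ℕ}

def reflSubgroup (i : ZMod n) : Subgroup (DihedralGroup n) := Subgroup.zpowers (sr i)

variable (n) in
def rotSubgroup : Subgroup (DihedralGroup n) := Subgroup.zpowers (r 1)

theorem mem_reflSubgroup [NeZero n] {i : ZMod n} {x : DihedralGroup n} :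
    x ∈ reflSubgroup i ↔ x = 1 ∨ x = sr i := by
  classical
  rw [reflSubgroup, mem_zpowers_iff_mem_range_orderOf, orderOf_sr]
  simp [Finset.range_add_one, or_comm]

@[simp] theorem r_mem_reflSubgroup [NeZero n] {i k : ZMod n} : r k ∈ reflSubgroup i ↔ k = 0 := by
  simp [mem_reflSubgroup, one_def, -r_zero]

@[simp] theorem sr_mem_reflSubgroup [NeZero n] {i k : ZMod n} : sr k ∈ reflSubgroup i ↔ k = i := by
  simp [mem_reflSubgroup, one_def, -r_zero]

@[simp] theorem r_mem_rotSubgroup (k : ZMod n) : r k ∈ rotSubgroup n := by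
  obtain ⟨m, rfl⟩ := ZMod.intCast_surjective k
  exact ⟨m, r_one_zpow m⟩

@[simp] theorem sr_not_mem_rotSubgroup (k : ZMod n) : sr k ∉ rotSubgroup n := by
  rintro ⟨m, hm⟩
  change r 1 ^ m = sr k at hm
  rw [r_one_zpow] at hm
  cases hm

theorem card_reflSubgroup (i : ZMod n) : Nat.card (reflSubgroup i) = 2 :=
  (Nat.card_zpowers _).trans (orderOf_sr i)

theorem card_rotSubgroup : Nat.card (rotSubgroup n) = n :=
  (Nat.card_zpowers _).trans orderOf_r_one

theorem index_reflSubgroup (i : ZMod n) : (reflSubgroup i).index = n := by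
  have h := (reflSubgroup i).card_mul_index
  rw [card_reflSubgroup, nat_card] at h
  omega

theorem index_rotSubgroup [NeZero n] : (rotSubgroup n).index = 2 := by
  have h := (rotSubgroup n).card_mul_index
  rw [card_rotSubgroup, nat_card, mul_comm] at h
  exact Nat.eq_of_mul_eq_mul_right (Nat.pos_of_ne_zero (NeZero.ne n)) h

instance [NeZero n] : (rotSubgroup n).Normal := Subgroup.normal_of_index_eq_two index_rotSubgroup

theorem reflSubgroup_ne_bot [NeZero n] (i : ZMod n) : reflSubgroup i ≠ ⊥ := fun h => by
  have := h ▸ (sr_mem_reflSubgroup (i := i)).mpr rfl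
  simp [one_def, -r_zero] at this

theorem not_reflSubgroup_le_rotSubgroup [NeZero n] (i : ZMod n) :
    ¬ reflSubgroup i ≤ rotSubgroup n :=
  fun h => sr_not_mem_rotSubgroup i (h (sr_mem_reflSubgroup.mpr rfl))

theorem not_top_le_rotSubgroup [NeZero n] : ¬ ⊤ ≤ rotSubgroup n :=
  fun h => not_reflSubgroup_le_rotSubgroup 0 (le_top.trans h)

theorem conj_smul_reflSubgroup (a i : ZMod n) :
    MulAut.conj (r a) • reflSubgroup i = reflSubgroup (i - 2 * a) := by
  rw [reflSubgroup, Subgroup.pointwise_smul_def]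
  refine (MonoidHom.map_zpowers (MulAut.conj (r a)).toMonoidHom _).trans ?_
  simp only [MulEquiv.coe_toMonoidHom, MulAut.conj_apply, inv_r, r_mul_sr, sr_mul_r]
  congr 2
  ring

end Subgroups

section DoubleCosets

variable {n : ℕ} [NeZero n]

theorem card_doubleCoset_reflSubgroup_zero :
    Nat.card (DoubleCoset.Quotient (↑(reflSubgroup (0 : ZMod n)) : Set (DihedralGroup n))
      ↑(reflSubgroup (0 : ZMod n))) = n / 2 + 1 := by
  -- The double coset of `r k` and of `sr k` is `{r k, r (-k), sr k, sr (-k)}`, so it is labelled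
  -- by `|valMinAbs k| ∈ [0, n / 2]`.
  let f : DihedralGroup n → ℕ := fun
    | r k => k.valMinAbs.natAbs
    | sr k => k.valMinAbs.natAbs
  have hker : DoubleCoset.setoid (↑(reflSubgroup (0 : ZMod n)) : Set (DihedralGroup n))
      ↑(reflSubgroup (0 : ZMod n)) = Setoid.ker f := by
    refine Setoid.ext fun a b => ?_
    rw [DoubleCoset.rel_iff, Setoid.ker_def]
    constructor
    · rintro ⟨h, hh, k, hk, rfl⟩
      rcases mem_reflSubgroup.mp hh with rfl | rfl <;>
        rcases mem_reflSubgroup.mp hk with rfl | rfl <;>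
        cases a <;> simp [f, ZMod.natAbs_valMinAbs_neg]
    · intro hab
      cases a <;> cases b <;>
        rcases ZMod.natAbs_valMinAbs_eq_natAbs_valMinAbs.mp hab with rfl | rfl
      all_goals first
        | (refine ⟨1, one_mem _, 1, one_mem _, ?_⟩; simp; done)
        | (refine ⟨sr 0, by simp, 1, one_mem _, ?_⟩; simp; done)
        | (refine ⟨1, one_mem _, sr 0, by simp, ?_⟩; simp; done)
        | (refine ⟨sr 0, by simp, sr 0, by simp, ?_⟩; simp)
  have hrange : Set.range f = Set.Iic (n / 2) := by
    refine Set.ext fun m => ⟨?_, fun hm => ⟨r m, ?_⟩⟩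
    · rintro ⟨a | a, rfl⟩ <;> exact ZMod.natAbs_valMinAbs_le a
    · simp [f, ZMod.valMinAbs_natCast_of_le_half (Set.mem_Iic.mp hm)]
  rw [DoubleCoset.Quotient, hker, Nat.card_congr (Setoid.quotientKerEquivRange f), hrange]
  simp

theorem card_doubleCoset_reflSubgroup_rotSubgroup :
    Nat.card (DoubleCoset.Quotient (↑(reflSubgroup (0 : ZMod n)) : Set (DihedralGroup n))
      ↑(rotSubgroup n)) = 1 :=
  DoubleCoset.card_quotient_eq_one fun
    | r k => ⟨1, one_mem _, r k, r_mem_rotSubgroup k, by simp⟩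
    | sr k => ⟨sr 0, by simp, r k, r_mem_rotSubgroup k, by simp⟩

theorem card_doubleCoset_rotSubgroup_reflSubgroup :
    Nat.card (DoubleCoset.Quotient (↑(rotSubgroup n) : Set (DihedralGroup n))
      ↑(reflSubgroup (0 : ZMod n))) = 1 :=
  DoubleCoset.card_quotient_eq_one fun
    | r k => ⟨r k, r_mem_rotSubgroup k, 1, one_mem _, by simp⟩
    | sr k => ⟨r (-k), r_mem_rotSubgroup _, sr 0, by simp, by simp⟩

end DoubleCosets

section SignTriple

variable {n : ℕ}

variable (n) in
noncomputable def signTriple : (BurnsideRing (DihedralGroup n))ˣ →* ℤˣ × ℤˣ × ℤˣ :=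
  (ghostUnitAt _ ⊥).prod ((ghostUnitAt _ (reflSubgroup 0)).prod (ghostUnitAt _ ⊤))

theorem signTriple_eq_iff {u : (BurnsideRing (DihedralGroup n))ˣ} {a b c : ℤˣ} :
    signTriple n u = (a, b, c) ↔
      ghost u ⊥ = a ∧ ghost u (reflSubgroup 0) = b ∧ ghost u ⊤ = c := by
  simp [signTriple, Units.ext_iff, coe_ghostUnitAt]

theorem signTriple_neg_one : signTriple n (-1) = (-1, -1, -1) :=
  signTriple_eq_iff.mpr ⟨rfl, rfl, rfl⟩

theorem signTriple_neg (u : (BurnsideRing (DihedralGroup n))ˣ) :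
    signTriple n (-u) = -signTriple n u := by
  rw [← neg_one_mul u, map_mul, signTriple_neg_one]
  ext <;> simp

theorem map_signTriple_eq_top {K : Subgroup (BurnsideRing (DihedralGroup n))ˣ} (hneg : -1 ∈ K)
    {t v : (BurnsideRing (DihedralGroup n))ˣ} (htK : t ∈ K) (hvK : v ∈ K)
    (ht : signTriple n t = (1, -1, -1)) (hv : signTriple n v = (1, -1, 1)) :
    K.map (signTriple n) = ⊤ :=
  Subgroup.eq_top_of_mem_sign_basis
    ⟨-t, by simpa using mul_mem hneg htK, by simp [signTriple_neg, ht]⟩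
    ⟨v, hvK, hv⟩ ⟨t * v, mul_mem htK hvK, by simp [ht, hv]⟩

variable (n) in
noncomputable def reflTopSign : (BurnsideRing (DihedralGroup n))ˣ →* ℤˣ :=
  ghostUnitAt _ (reflSubgroup 0) * ghostUnitAt _ ⊤

theorem reflTopSign_apply (u : (BurnsideRing (DihedralGroup n))ˣ) :
    reflTopSign n u = (signTriple n u).2.1 * (signTriple n u).2.2 := rfl

end SignTriple

section Prime

variable {p : ℕ} [Fact p.Prime]

theorem rotSubgroup_ne_bot : rotSubgroup p ≠ ⊥ := fun h => by
  have := h ▸ r_mem_rotSubgroup (1 : ZMod p)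
  simp [one_def, -r_zero] at this

theorem rotSubgroup_le_of_r_mem {H : Subgroup (DihedralGroup p)} {k : ZMod p} (hk : k ≠ 0)
    (h : r k ∈ H) : rotSubgroup p ≤ H := by
  rw [rotSubgroup, Subgroup.zpowers_le]
  have : r 1 = r k ^ (k⁻¹).val := by
    rw [r_pow, ZMod.natCast_zmod_val, mul_inv_cancel₀ hk]
  exact this ▸ pow_mem h _

theorem eq_bot_or_reflSubgroup_or_rotSubgroup_or_top (H : Subgroup (DihedralGroup p)) :
    H = ⊥ ∨ (∃ i, H = reflSubgroup i) ∨ H = rotSubgroup p ∨ H = ⊤ := by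
  by_cases hrot : ∃ k ≠ 0, r k ∈ H
  · obtain ⟨k, hk, hkH⟩ := hrot
    have hCH := rotSubgroup_le_of_r_mem hk hkH
    by_cases hrefl : ∃ i, sr i ∈ H
    · obtain ⟨i, hi⟩ := hrefl
      refine Or.inr (Or.inr (Or.inr (eq_top_iff.mpr ?_)))
      rintro (m | m) -
      · exact hCH (r_mem_rotSubgroup m)
      · simpa using mul_mem hi (hCH (r_mem_rotSubgroup (m - i)))
    · push Not at hrefl
      refine Or.inr (Or.inr (Or.inl (le_antisymm ?_ hCH)))
      rintro (m | m) hm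
      · exact r_mem_rotSubgroup m
      · exact absurd hm (hrefl m)
  · push Not at hrot
    have hr : ∀ k, r k ∈ H → k = 0 := fun k hk => by_contra fun h => hrot k h hk
    by_cases hrefl : ∃ i, sr i ∈ H
    · obtain ⟨i, hi⟩ := hrefl
      refine Or.inr (Or.inl ⟨i, le_antisymm ?_ (Subgroup.zpowers_le.mpr hi)⟩)
      rintro (m | m) hm
      · simpa using hr m hm
      · have := hr _ (by simpa using mul_mem hi hm)
        simpa [sub_eq_zero] using this
    · push Not at hrefl
      refine Or.inl (eq_bot_iff.mpr ?_)
      rintro (m | m) hm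
      · simp [hr m hm]
      · exact absurd hm (hrefl m)

theorem reflSubgroup_eq_conj_smul (hp2 : p ≠ 2) (i : ZMod p) :
    ∃ g : DihedralGroup p, reflSubgroup i = MulAut.conj g • reflSubgroup 0 := by
  have := ZMod.two_ne_zero_of_ne_two hp2
  refine ⟨r (-(i / 2)), ?_⟩
  rw [conj_smul_reflSubgroup]
  congr 1
  field_simp
  ring

theorem funext_subgroup_of_conj_invariant (hp2 : p ≠ 2) {β : Type*}
    {f f' : Subgroup (DihedralGroup p) → β}
    (hf : ∀ (g : DihedralGroup p) H, f (MulAut.conj g • H) = f H)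
    (hf' : ∀ (g : DihedralGroup p) H, f' (MulAut.conj g • H) = f' H)
    (hbot : f ⊥ = f' ⊥) (hrefl : f (reflSubgroup (0 : ZMod p)) = f' (reflSubgroup 0))
    (hrot : f (rotSubgroup p) = f' (rotSubgroup p)) (htop : f ⊤ = f' ⊤) : f = f' := by
  funext H
  rcases eq_bot_or_reflSubgroup_or_rotSubgroup_or_top H with rfl | ⟨i, rfl⟩ | rfl | rfl
  · exact hbot
  · obtain ⟨g, hg⟩ := reflSubgroup_eq_conj_smul hp2 i
    rw [hg, hf, hf', hrefl]
  · exact hrot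
  · exact htop

theorem burnsideMark_reflSubgroup_self (hp2 : p ≠ 2) :
    burnsideMark (DihedralGroup p) (reflSubgroup 0) (reflSubgroup 0) = 1 := by
  have h2 := ZMod.two_ne_zero_of_ne_two hp2
  -- `sr 0` fixes `g R` only if `g` commutes with `sr 0`, i.e. `g ∈ R` since `p` is odd.
  have hfix : ∀ g : DihedralGroup p,
      (sr 0 : DihedralGroup p) • (g : DihedralGroup p ⧸ reflSubgroup (0 : ZMod p)) = g →
      (g : DihedralGroup p ⧸ reflSubgroup (0 : ZMod p)) = ((1 : DihedralGroup p) : _ ⧸ _) := by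
    intro g hg
    rw [QuotientGroup.smul_mk_eq_self_iff] at hg
    rw [QuotientGroup.eq]
    cases g <;> simp only [inv_r, inv_sr, r_mul_sr, sr_mul_r, sr_mul_sr, zero_add, zero_sub,
      sub_neg_eq_add, mul_one, sr_mem_reflSubgroup, r_mem_reflSubgroup, neg_eq_zero] at hg ⊢ <;>
      exact (mul_eq_zero.mp ((two_mul _).trans hg)).resolve_left h2
  rw [burnsideMark, Nat.cast_eq_one, Nat.card_eq_one_iff_unique]
  refine ⟨⟨fun ⟨x, hx⟩ ⟨y, hy⟩ => ?_⟩, ⟨⟨((1 : DihedralGroup p) : _ ⧸ _), fun h hh => ?_⟩⟩⟩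
  · induction x using QuotientGroup.induction_on with | H g => ?_
    induction y using QuotientGroup.induction_on with | H g' => ?_
    exact Subtype.ext ((hfix g (hx _ (by simp))).trans (hfix g' (hy _ (by simp))).symm)
  · rw [QuotientGroup.smul_mk_eq_self_iff]
    simpa using hh

theorem burnsideMark_reflSubgroup_of_r_one_mem {H : Subgroup (DihedralGroup p)} (hH : r 1 ∈ H) :
    burnsideMark (DihedralGroup p) (reflSubgroup 0) H = 0 := by
  refine burnsideMark_eq_zero hH fun g => ?_
  cases g <;> simp

theorem ghost_rotSubgroup (hp2 : p ≠ 2) (u : (BurnsideRing (DihedralGroup p))ˣ) :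
    ghost u (rotSubgroup p) = ghost u ⊥ := by
  have hP : IsPGroup p (rotSubgroup p) :=
    IsPGroup.of_card (n := 1) (by rw [card_rotSubgroup, pow_one])
  have hdvd : ¬ (p : ℤ) ∣ 2 := fun hd => hp2
    ((Nat.prime_dvd_prime_iff_eq Fact.out Nat.prime_two).mp (Int.natCast_dvd_natCast.mp hd))
  exact congrArg Units.val (Int.units_eq_of_modEq hdvd (a := ghostUnitAt _ ⊥ u)
    (b := ghostUnitAt _ (rotSubgroup p) u) (BurnsideRing.apply_bot_modEq hP u.val.2)) |>.symm

theorem ghost_eq_of_apply_eq (hp2 : p ≠ 2) {u : (BurnsideRing (DihedralGroup p))ˣ}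
    {f : Subgroup (DihedralGroup p) → ℤ}
    (hf : ∀ (g : DihedralGroup p) H, f (MulAut.conj g • H) = f H)
    (hrot : f (rotSubgroup p) = f ⊥) (hbot : ghost u ⊥ = f ⊥)
    (hrefl : ghost u (reflSubgroup 0) = f (reflSubgroup 0)) (htop : ghost u ⊤ = f ⊤) :
    ghost u = f :=
  funext_subgroup_of_conj_invariant hp2 (BurnsideRing.apply_conj_smul u.val.2) hf hbot hrefl
    (by rw [ghost_rotSubgroup hp2, hbot, hrot]) htop

theorem signTriple_injective (hp2 : p ≠ 2) : Function.Injective (signTriple p) := by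
  intro u v h
  obtain ⟨hbot, hrefl, htop⟩ := signTriple_eq_iff.mp h
  exact ghost_injective (ghost_eq_of_apply_eq hp2 (BurnsideRing.apply_conj_smul v.val.2)
    (ghost_rotSubgroup hp2 v) hbot hrefl htop)

theorem tenNegOne_bot_eq (hp2 : p ≠ 2) :
    tenNegOne (⊥ : Subgroup (DihedralGroup p)) = burnsideMark _ (rotSubgroup p) - 1 := by
  have hodd := (Fact.out : p.Prime).odd_of_ne_two hp2
  refine funext_subgroup_of_conj_invariant hp2 (tenNegOne_apply_conj_smul ⊥)
    (BurnsideRing.apply_conj_smul (sub_mem (burnsideMark_mem _) (one_mem _))) ?_ ?_ ?_ ?_ <;>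
    simp [tenNegOne_bot_apply, burnsideMark_apply_bot, index_rotSubgroup, index_reflSubgroup,
      hodd.neg_one_pow, card, burnsideMark_of_le_of_normal le_rfl,
      burnsideMark_of_not_le_of_normal (not_reflSubgroup_le_rotSubgroup 0),
      burnsideMark_of_not_le_of_normal not_top_le_rotSubgroup]

theorem exists_ghost_eq_tenNegOne_bot (hp2 : p ≠ 2) :
    ∃ t : (BurnsideRing (DihedralGroup p))ˣ, ghost t = tenNegOne ⊥ ∧
      signTriple p t = (1, -1, -1) := by
  have hodd := (Fact.out : p.Prime).odd_of_ne_two hp2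
  obtain ⟨t, ht⟩ := exists_ghost_eq_tenNegOne (by
    rw [tenNegOne_bot_eq hp2]
    exact sub_mem (burnsideMark_mem _) (one_mem _))
  refine ⟨t, ht, signTriple_eq_iff.mpr ?_⟩
  simp [ht, tenNegOne_bot_apply, card, index_reflSubgroup, hodd.neg_one_pow]

theorem exists_signTriple_eq_one_neg_one_one (hp2 : p ≠ 2) :
    ∃ v : (BurnsideRing (DihedralGroup p))ˣ, signTriple p v = (1, -1, 1) := by
  set f := burnsideMark (DihedralGroup p) ⊥ - (2 : ℤ) • burnsideMark _ (reflSubgroup 0) + 1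
    with hf_def
  have hf : f ∈ BurnsideRing (DihedralGroup p) :=
    add_mem (sub_mem (burnsideMark_mem _) (zsmul_mem (burnsideMark_mem _) 2)) (one_mem _)
  have hval : f ⊥ = 1 ∧ f (reflSubgroup 0) = -1 ∧ f (rotSubgroup p) = 1 ∧ f ⊤ = 1 := by
    simp [hf_def, burnsideMark_apply_bot, card, index_reflSubgroup,
      burnsideMark_bot_apply_of_ne_bot, reflSubgroup_ne_bot, rotSubgroup_ne_bot,
      burnsideMark_reflSubgroup_self hp2,
      burnsideMark_reflSubgroup_of_r_one_mem (r_mem_rotSubgroup 1),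
      burnsideMark_reflSubgroup_of_r_one_mem (Subgroup.mem_top (r 1))]
  have hsq : f * f = 1 := by
    refine funext_subgroup_of_conj_invariant hp2 (BurnsideRing.apply_conj_smul (mul_mem hf hf))
      (fun _ _ => rfl) ?_ ?_ ?_ ?_ <;> simp [hval]
  obtain ⟨v, hv⟩ := exists_ghost_eq_of_mul_self_eq_one hf hsq
  exact ⟨v, signTriple_eq_iff.mpr (by simp [hv, hval])⟩

theorem signTriple_surjective (hp2 : p ≠ 2) : Function.Surjective (signTriple p) := by
  obtain ⟨t, -, ht⟩ := exists_ghost_eq_tenNegOne_bot hp2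
  obtain ⟨v, hv⟩ := exists_signTriple_eq_one_neg_one_one hp2
  rw [← MonoidHom.range_eq_top, MonoidHom.range_eq_map]
  exact map_signTriple_eq_top (Subgroup.mem_top _) (Subgroup.mem_top t) (Subgroup.mem_top v) ht hv

theorem card_units_burnsideRing (hp2 : p ≠ 2) :
    Nat.card (BurnsideRing (DihedralGroup p))ˣ = 8 := by
  rw [Nat.card_congr (Equiv.ofBijective _ ⟨signTriple_injective hp2, signTriple_surjective hp2⟩)]
  simp [Nat.card_eq_fintype_card, Fintype.card_units_int]

theorem ghost_neg_eq_tenNegOne_reflSubgroup (h3 : p % 4 = 3)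
    {v : (BurnsideRing (DihedralGroup p))ˣ} (hv : signTriple p v = (1, -1, 1)) :
    ghost (-v) = tenNegOne (reflSubgroup 0) := by
  have hp2 : p ≠ 2 := by omega
  have hodd := (Fact.out : p.Prime).odd_of_ne_two hp2
  obtain ⟨hbot, hrefl, htop⟩ := signTriple_eq_iff.mp hv
  have hghost : ∀ L, ghost (-v) L = -ghost v L := fun _ => rfl
  refine ghost_eq_of_apply_eq hp2 (tenNegOne_apply_conj_smul _) ?_ ?_ ?_ ?_
  · rw [tenNegOne, card_doubleCoset_rotSubgroup_reflSubgroup, tenNegOne_apply_bot,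
      index_reflSubgroup, hodd.neg_one_pow, pow_one]
  · rw [hghost, hbot, tenNegOne_apply_bot, index_reflSubgroup, hodd.neg_one_pow, Units.val_one]
  · rw [hghost, hrefl, tenNegOne, card_doubleCoset_reflSubgroup_zero,
      Even.neg_one_pow (Nat.even_iff.mpr (by omega)), Units.val_neg, Units.val_one, neg_neg]
  · rw [hghost, htop, tenNegOne_apply_top, Units.val_one]

theorem closure_tenNegOneUnits_eq_top (h3 : p % 4 = 3) :
    Subgroup.closure (tenNegOneUnits (DihedralGroup p)) = ⊤ := by
  have hp2 : p ≠ 2 := by omega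
  obtain ⟨t, htS, ht⟩ := exists_ghost_eq_tenNegOne_bot hp2
  obtain ⟨v, hv⟩ := exists_signTriple_eq_one_neg_one_one hp2
  set K := Subgroup.closure (tenNegOneUnits (DihedralGroup p))
  have hneg : -1 ∈ K := Subgroup.subset_closure neg_one_mem_tenNegOneUnits
  have hv' : -v ∈ K := Subgroup.subset_closure
    ⟨reflSubgroup 0, ghost_neg_eq_tenNegOne_reflSubgroup h3 hv⟩
  have hmap := map_signTriple_eq_top hneg (Subgroup.subset_closure ⟨⊥, htS⟩)
    (by simpa using mul_mem hneg hv') ht hv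
  rw [← Subgroup.comap_map_eq_self_of_injective (signTriple_injective hp2) K, hmap,
    Subgroup.comap_top]

theorem tenNegOne_apply_reflSubgroup_of_mod_four_eq_one (h1 : p % 4 = 1)
    (H : Subgroup (DihedralGroup p)) : tenNegOne H (reflSubgroup 0) = -1 := by
  have hp2 : p ≠ 2 := by omega
  have hodd := (Fact.out : p.Prime).odd_of_ne_two hp2
  rcases eq_bot_or_reflSubgroup_or_rotSubgroup_or_top H with rfl | ⟨i, rfl⟩ | rfl | rfl
  · rw [tenNegOne_bot_apply, index_reflSubgroup, hodd.neg_one_pow]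
  · obtain ⟨g, hg⟩ := reflSubgroup_eq_conj_smul hp2 i
    rw [hg, tenNegOne_conj_smul, tenNegOne, card_doubleCoset_reflSubgroup_zero,
      Odd.neg_one_pow (Nat.odd_iff.mpr (by omega))]
  · rw [tenNegOne, card_doubleCoset_reflSubgroup_rotSubgroup, pow_one]
  · rw [tenNegOne_top, Pi.neg_apply, Pi.one_apply]

theorem closure_tenNegOneUnits_le_ker (h1 : p % 4 = 1) :
    Subgroup.closure (tenNegOneUnits (DihedralGroup p)) ≤ (reflTopSign p).ker := by
  refine (Subgroup.closure_le _).mpr ?_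
  rintro u ⟨H, hH⟩
  simp [MonoidHom.mem_ker, reflTopSign, Units.ext_iff, coe_ghostUnitAt, hH,
    tenNegOne_apply_reflSubgroup_of_mod_four_eq_one h1, tenNegOne_apply_top]

theorem ker_reflTopSign_le (hp2 : p ≠ 2) {K : Subgroup (BurnsideRing (DihedralGroup p))ˣ}
    (hneg : -1 ∈ K) {t : (BurnsideRing (DihedralGroup p))ˣ} (htK : t ∈ K)
    (ht : signTriple p t = (1, -1, -1)) : (reflTopSign p).ker ≤ K := by
  intro u hu
  rcases hs : signTriple p u with ⟨a, b, c⟩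
  obtain rfl : c = b := by
    rw [MonoidHom.mem_ker, reflTopSign_apply, hs] at hu
    have hbc : b * c = 1 := hu
    rw [eq_inv_of_mul_eq_one_right hbc, Int.units_inv_eq_self]
  have hmem : ∀ w ∈ K, signTriple p w = (a, c, c) → u ∈ K :=
    fun w hw h => signTriple_injective hp2 (h.trans hs.symm) ▸ hw
  rcases Int.units_eq_one_or a with rfl | rfl <;> rcases Int.units_eq_one_or c with rfl | rfl
  · exact hmem 1 (one_mem K) (map_one _)
  · exact hmem t htK ht
  · exact hmem (-t) (by simpa using mul_mem hneg htK) (by simp [signTriple_neg, ht])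
  · exact hmem (-1) hneg signTriple_neg_one

theorem index_closure_tenNegOneUnits (h1 : p % 4 = 1) :
    (Subgroup.closure (tenNegOneUnits (DihedralGroup p))).index = 2 := by
  have hp2 : p ≠ 2 := by omega
  obtain ⟨t, htS, ht⟩ := exists_ghost_eq_tenNegOne_bot hp2
  obtain ⟨v, hv⟩ := exists_signTriple_eq_one_neg_one_one hp2
  have hsurj : Function.Surjective (reflTopSign p) := fun x => by
    rcases Int.units_eq_one_or x with rfl | rfl
    exacts [⟨1, map_one _⟩, ⟨v, by simp [reflTopSign_apply, hv]⟩]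
  rw [le_antisymm (closure_tenNegOneUnits_le_ker h1) (ker_reflTopSign_le hp2
      (Subgroup.subset_closure neg_one_mem_tenNegOneUnits) (Subgroup.subset_closure ⟨⊥, htS⟩) ht),
    Subgroup.index_ker, MonoidHom.range_eq_top.mpr hsurj, Subgroup.card_top,
    Nat.card_eq_fintype_card, Fintype.card_units_int]

end Prime

end DihedralGroup

/-- For a prime `p ≡ 1 (mod 4)`, the dihedral group `D₂ₚ` is residual with
respect to `B^×`: the subgroup of `B^×(D₂ₚ)` generated by the tensor inductions
`Ten^{D₂ₚ}_H(-1)` has index `2` in `B^×(D₂ₚ)`, which has order `2³ = 8`.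
For `p ≡ 3 (mod 4)` these elements generate all of `B^×(D₂ₚ)`. -/
theorem dihedral_residual_iff_one_mod_four (p : ℕ) (hp : p.Prime) :
    (p % 4 = 1 →
      Nat.card ((BurnsideRing (DihedralGroup p))ˣ) = 8 ∧
      (Subgroup.closure {v : (BurnsideRing (DihedralGroup p))ˣ |
        ∃ H : Subgroup (DihedralGroup p), ghost v = tenNegOne H}).index = 2) ∧
    (p % 4 = 3 →
      Subgroup.closure {v : (BurnsideRing (DihedralGroup p))ˣ |
        ∃ H : Subgroup (DihedralGroup p), ghost v = tenNegOne H} = ⊤) := by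
  have := Fact.mk hp
  exact ⟨fun h1 => ⟨DihedralGroup.card_units_burnsideRing (by omega),
      DihedralGroup.index_closure_tenNegOneUnits h1⟩,
    DihedralGroup.closure_tenNegOneUnits_eq_top⟩
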